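/- arXiv:0801.1999 — 2 statements merged into one kernel-verified Lean document; each statement's English description precedes it below -/
import Mathlib

section
/- For small $\lambda>0$ and $1<\xi<\lambda^{-1}$, the Green's function $G_0(\xi,\eta;\lambda)$ of $-\partial_\xi^2-\frac{1}{4\xi^2}$ satisfies $|G_0(\xi,\eta;\lambda)|\lesssim (\xi\eta)^{1/2}|\log\lambda|^2\,\chi_{[\xi<\eta<\lambda^{-1}]}+(\xi/\lambda)^{1/2}|\log\lambda|\,\chi_{[\eta>\lambda^{-1}]}$. -/
/-!
Since `G₀ = Im(conj f₀(ξ) f₀(η)) / λ` and `|f₀(t)| = √(π/2) √(tλ) |H₀⁺(tλ)|`, it suffices to bound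
`√x |H₀⁺(x)|` at `x = ξλ` and `x = ηλ`. For `λ ≤ x ≤ 1` the logarithmic bound gives
`√x |H₀⁺(x)| ≲ √x |log λ|`, and for `x > 1` the decay `|H₀⁺(x)| ≲ x^{-1/2}` gives `√x |H₀⁺(x)| ≲ 1`.
Multiplying the two factors and dividing by `λ` yields `√(ξη) |log λ|²` and `√(ξ/λ) |log λ|`;
taking `λ < e⁻¹` absorbs the `1 + |log λ|` coming from the logarithmic bound into `2 |log λ|`.
-/

open Real

lemma norm_wronskian_div_le (a b : ℂ) (lam : ℝ) :
    ‖(starRingEnd ℂ a * b - a * starRingEnd ℂ b) / (2 * Complex.I * lam)‖ ≤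
      ‖a‖ * ‖b‖ / |lam| := by
  have hnum : ‖starRingEnd ℂ a * b - a * starRingEnd ℂ b‖ ≤ 2 * (‖a‖ * ‖b‖) := by
    calc _ ≤ ‖starRingEnd ℂ a * b‖ + ‖a * starRingEnd ℂ b‖ := norm_sub_le _ _
      _ = 2 * (‖a‖ * ‖b‖) := by simp only [norm_mul, RCLike.norm_conj]; ring
  calc _ = ‖starRingEnd ℂ a * b - a * starRingEnd ℂ b‖ / (2 * |lam|) := by simp
    _ ≤ 2 * (‖a‖ * ‖b‖) / (2 * |lam|) := by gcongr
    _ = ‖a‖ * ‖b‖ / |lam| := mul_div_mul_left _ _ two_ne_zero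

lemma abs_log_le_abs_log_of_le {a x : ℝ} (ha : 0 < a) (hax : a ≤ x) (hx : x ≤ 1) :
    |log x| ≤ |log a| := by
  rw [abs_of_nonpos (log_nonpos (ha.trans_le hax).le hx),
    abs_of_nonpos (log_nonpos ha.le (hax.trans hx))]
  exact neg_le_neg (log_le_log ha hax)

lemma one_le_abs_log_of_lt_exp_neg_one {x : ℝ} (hx : 0 < x) (hx1 : x < exp (-1)) :
    1 ≤ |log x| := by
  have : log x < -1 := (log_lt_iff_lt_exp hx).2 hx1
  exact le_abs.2 (Or.inr (by linarith))

lemma sqrt_mul_sqrt_mul_div {x y lam : ℝ} (hx : 0 ≤ x) (hlam : 0 < lam) :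
    √(x * lam) * √(y * lam) / lam = √(x * y) := by
  rw [← sqrt_mul (by positivity), show x * lam * (y * lam) = x * y * lam ^ 2 by ring,
    sqrt_mul' _ (by positivity), sqrt_sq hlam.le, mul_div_cancel_right₀ _ hlam.ne']

lemma sqrt_mul_div {x lam : ℝ} (hlam : 0 < lam) : √(x * lam) / lam = √(x / lam) := by
  rw [show x / lam = x * lam / lam ^ 2 by field_simp, sqrt_div' _ (by positivity),
    sqrt_sq hlam.le]

lemma sqrt_mul_rpow_neg_half {x : ℝ} (hx : 0 < x) : √x * x ^ (-(1 : ℝ) / 2) = 1 := by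
  rw [sqrt_eq_rpow, ← rpow_add hx]
  norm_num

section HankelBounds

variable {C1 : ℝ} {H : ℝ → ℂ}

lemma nonneg_of_norm_le_mul_one_add_abs_log
    (hH1 : ∀ x : ℝ, 0 < x → x ≤ 1 → ‖H x‖ ≤ C1 * (1 + |log x|)) : 0 ≤ C1 := by
  simpa using (norm_nonneg _).trans (hH1 1 one_pos le_rfl)

lemma sqrt_mul_norm_le_of_le_inv (hH1 : ∀ x : ℝ, 0 < x → x ≤ 1 → ‖H x‖ ≤ C1 * (1 + |log x|))
    {lam t : ℝ} (hlam : 0 < lam) (ht : 1 ≤ t) (htlam : t ≤ lam⁻¹) :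
    √(t * lam) * ‖H (t * lam)‖ ≤ √(t * lam) * (C1 * (1 + |log lam|)) := by
  have hC1 := nonneg_of_norm_le_mul_one_add_abs_log hH1
  have hlo : lam ≤ t * lam := le_mul_of_one_le_left hlam.le ht
  have hhi : t * lam ≤ 1 := by rwa [← le_div_iff₀ hlam, one_div]
  gcongr
  exact (hH1 _ (hlam.trans_le hlo) hhi).trans <| mul_le_mul_of_nonneg_left
    (add_le_add_right (abs_log_le_abs_log_of_le hlam hlo hhi) 1) hC1

lemma sqrt_mul_norm_le_of_inv_lt (hH2 : ∀ x : ℝ, 1 < x → ‖H x‖ ≤ C1 * x ^ (-(1 : ℝ) / 2))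
    {lam t : ℝ} (hlam : 0 < lam) (ht : lam⁻¹ < t) : √(t * lam) * ‖H (t * lam)‖ ≤ C1 := by
  have hx : 1 < t * lam := (inv_lt_iff_one_lt_mul₀ hlam).1 ht
  calc √(t * lam) * ‖H (t * lam)‖ ≤ √(t * lam) * (C1 * (t * lam) ^ (-(1 : ℝ) / 2)) := by
        gcongr; exact hH2 _ hx
    _ = C1 := by rw [mul_left_comm, sqrt_mul_rpow_neg_half (one_pos.trans hx), mul_one]

lemma norm_G0_le {f0 : ℝ → ℝ → ℂ} {G0 : ℝ → ℝ → ℝ → ℂ}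
    (hf0 : ∀ lam ξ : ℝ, f0 lam ξ = (√(π / 2) : ℂ) *
        Complex.exp (Complex.I * (π : ℂ) / 4) * (√(ξ * lam) : ℂ) * H (ξ * lam))
    (hG0 : ∀ lam ξ η : ℝ, G0 lam ξ η =
      ((starRingEnd ℂ) (f0 lam ξ) * f0 lam η - f0 lam ξ * (starRingEnd ℂ) (f0 lam η))
        / (2 * Complex.I * (lam : ℂ)))
    {lam : ℝ} (hlam : 0 < lam) (ξ η : ℝ) :
    ‖G0 lam ξ η‖ ≤
      π / 2 * (√(ξ * lam) * ‖H (ξ * lam)‖) * (√(η * lam) * ‖H (η * lam)‖) / lam := by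
  have hnorm (t : ℝ) : ‖f0 lam t‖ = √(π / 2) * (√(t * lam) * ‖H (t * lam)‖) := by
    simp [hf0, Complex.norm_exp, mul_assoc, abs_of_nonneg, sqrt_nonneg]
  calc _ ≤ ‖f0 lam ξ‖ * ‖f0 lam η‖ / |lam| := hG0 lam ξ η ▸ norm_wronskian_div_le _ _ lam
    _ = √(π / 2) * √(π / 2) *
          (√(ξ * lam) * ‖H (ξ * lam)‖) * (√(η * lam) * ‖H (η * lam)‖) / lam := by
        rw [hnorm, hnorm, abs_of_pos hlam]; ring
    _ = _ := by rw [mul_self_sqrt (by positivity)]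

end HankelBounds

/-- Bound for the Green's function of `-∂_ξ² - 1/(4ξ²)` for small `λ > 0` and `1 < ξ < λ⁻¹`:
`|G₀(ξ,η;λ)| ≲ (ξη)^{1/2}|log λ|² χ_{[ξ<η<λ⁻¹]} + (ξ/λ)^{1/2}|log λ| χ_{[η>λ⁻¹]}`. -/
theorem G0_low_energy_bound (C1 : ℝ) (H : ℝ → ℂ)
    (hH1 : ∀ x : ℝ, 0 < x → x ≤ 1 → ‖H x‖ ≤ C1 * (1 + |Real.log x|))
    (hH2 : ∀ x : ℝ, 1 < x → ‖H x‖ ≤ C1 * x ^ (-(1 : ℝ) / 2))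
    (f0 : ℝ → ℝ → ℂ)
    (hf0 : ∀ lam ξ : ℝ, f0 lam ξ = (Real.sqrt (Real.pi / 2) : ℂ) *
        Complex.exp (Complex.I * (Real.pi : ℂ) / 4) * (Real.sqrt (ξ * lam) : ℂ) * H (ξ * lam))
    (G0 : ℝ → ℝ → ℝ → ℂ)
    (hG0 : ∀ lam ξ η : ℝ, G0 lam ξ η =
      ((starRingEnd ℂ) (f0 lam ξ) * f0 lam η - f0 lam ξ * (starRingEnd ℂ) (f0 lam η))
        / (2 * Complex.I * (lam : ℂ))) :
    ∃ C > 0, ∃ lam0 > 0, ∀ lam : ℝ, 0 < lam → lam < lam0 →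
      ∀ ξ : ℝ, 1 < ξ → ξ < lam⁻¹ → ∀ η : ℝ, ξ < η →
        (η < lam⁻¹ → ‖G0 lam ξ η‖ ≤ C * Real.sqrt (ξ * η) * (Real.log lam) ^ 2) ∧
        (lam⁻¹ < η → ‖G0 lam ξ η‖ ≤ C * Real.sqrt (ξ / lam) * |Real.log lam|) := by
  refine ⟨2 * π * C1 ^ 2 + 1, by positivity, exp (-1), exp_pos _, ?_⟩
  intro lam hlam hlam0 ξ hξ hξlam η hξη
  have hC1 := nonneg_of_norm_le_mul_one_add_abs_log hH1
  have hL : 1 ≤ |log lam| := one_le_abs_log_of_lt_exp_neg_one hlam hlam0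
  have hG := norm_G0_le hf0 hG0 hlam ξ η
  have hξH := sqrt_mul_norm_le_of_le_inv hH1 hlam hξ.le hξlam.le
  constructor
  · intro hη
    have hηH := sqrt_mul_norm_le_of_le_inv hH1 hlam (hξ.trans hξη).le hη.le
    calc _ ≤ π / 2 * (√(ξ * lam) * (C1 * (1 + |log lam|))) *
            (√(η * lam) * (C1 * (1 + |log lam|))) / lam := hG.trans (by gcongr)
      _ = π / 2 * C1 ^ 2 * (1 + |log lam|) ^ 2 * (√(ξ * lam) * √(η * lam) / lam) := by ring
      _ ≤ π / 2 * C1 ^ 2 * (2 * |log lam|) ^ 2 * √(ξ * η) := by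
          rw [sqrt_mul_sqrt_mul_div (by positivity) hlam]; gcongr; linarith
      _ = 2 * π * C1 ^ 2 * √(ξ * η) * (log lam) ^ 2 := by rw [mul_pow, sq_abs]; ring
      _ ≤ (2 * π * C1 ^ 2 + 1) * √(ξ * η) * (log lam) ^ 2 := by gcongr; linarith
  · intro hη
    have hηH := sqrt_mul_norm_le_of_inv_lt hH2 hlam hη
    calc _ ≤ π / 2 * (√(ξ * lam) * (C1 * (1 + |log lam|))) * C1 / lam := hG.trans (by gcongr)
      _ = π / 2 * C1 ^ 2 * (1 + |log lam|) * (√(ξ * lam) / lam) := by ring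
      _ ≤ π / 2 * C1 ^ 2 * (2 * |log lam|) * √(ξ / lam) := by
          rw [sqrt_mul_div hlam]; gcongr; linarith
      _ = π * C1 ^ 2 * √(ξ / lam) * |log lam| := by ring
      _ ≤ (2 * π * C1 ^ 2 + 1) * √(ξ / lam) * |log lam| := by
          gcongr; nlinarith [pi_pos, sq_nonneg C1]
end

section
/- Let $V(\xi)=-\frac{1}{4\xi^2}+V_1(\xi)$ on $\xi>0$ with $|V_1(\xi)|\lesssim\xi^{-3}$, and let $m(x)=\sqrt{x}|\log x|$ for $0<x<1$ and $m(x)=1$ for $x\ge1$. If $f_+(\cdot,\lambda)$ solves the perturbed Volterra equation $f_+(\xi,\lambda)=f_0(\xi,\lambda)+\int_\xi^\infty G_0(\xi,\eta;\lambda)V_1(\eta)f_+(\eta,\lambda)\,d\eta$ with $|f_0(\xi,\lambda)|\lesssim m(\xi\lambda)$ and $|G_0(\xi,\eta;\lambda)|\lesssim\lambda^{-1}m(\xi\lambda)m(\eta\lambda)$, then for small $\lambda>0$ and $|\log\lambda|^2\le\xi\ll\lambda^{-1}$ one has $|f_+(\xi,\lambda)|\lesssim m(\xi\lambda)$ and $|f_+(\xi,\lambda)-f_0(\xi,\lambda)|\lesssim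 \xi^{-1/2}\lambda^{1/2-\varepsilon}$ for any fixed $\varepsilon>0$. -/
/-!
Write `L = (log λ)²`. For `η ≥ 1` the kernel `λ⁻¹ η⁻³ m(ηλ)²` of the Volterra equation, weighted by
`m`, is at most `L η⁻²`, since `|log (ηλ)| ≤ |log λ|` while `ηλ < 1`. Hence `g = |f₊| / m(·λ)`
satisfies the backward integral inequality `g(ξ) ≤ C₀ + C₀² L ∫_ξ^∞ g(η) η⁻² dη`, and the
Gronwall weight `exp (2 C₀² L / ξ)` makes it a contraction: the best constant `T` in
`g ≤ T exp (2 C₀² L / ·)` on `[L, ∞)` (finite by the a priori bound) satisfies `T ≤ C₀ + T / 2`.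
For `ξ ≥ L` this gives `|f₊| ≲ m(ξλ)`; feeding this back into the integral gives
`|f₊ - f₀| ≲ L m(ξλ) / ξ ≤ ξ^{-1/2} λ^{1/2} |log λ|³`, and `|log λ|³ λ^ε` is bounded.
-/

open MeasureTheory

/-- The weight `m(x) = √x |log x|` for `0 < x < 1` and `m(x) = 1` for `x ≥ 1`. -/
noncomputable def mwt (x : ℝ) : ℝ := if x < 1 then Real.sqrt x * |Real.log x| else 1

open Real Set Filter Topology

lemma mwt_nonneg (x : ℝ) : 0 ≤ mwt x := by
  unfold mwt
  split_ifs <;> positivity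

lemma mwt_pos {x : ℝ} (hx : 0 < x) : 0 < mwt x := by
  unfold mwt
  split_ifs with h
  · exact mul_pos (sqrt_pos.2 hx) (abs_pos.2 (log_neg hx h).ne)
  · exact one_pos

lemma abs_log_mul_le_abs_log {η lam : ℝ} (hlam : 0 < lam) (hη : 1 ≤ η) (h : η * lam ≤ 1) :
    |log (η * lam)| ≤ |log lam| := by
  have hle : log lam ≤ log (η * lam) := log_le_log hlam (by nlinarith)
  have hnonpos : log (η * lam) ≤ 0 := log_nonpos (by positivity) h
  rw [abs_of_nonpos hnonpos, abs_of_nonpos (hle.trans hnonpos)]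
  linarith

lemma one_le_abs_log_of_lt_exp_neg_one_s16 {lam : ℝ} (hlam : 0 < lam) (h : lam < exp (-1)) :
    1 ≤ |log lam| := by
  have hlog : log lam < -1 := by rwa [← log_exp (-1), log_lt_log_iff hlam (exp_pos _)]
  rw [abs_of_neg (by linarith)]
  linarith

lemma mwt_le_sqrt_mul_abs_log {ξ lam : ℝ} (hlam : 0 < lam) (hlog : 1 ≤ |log lam|) (hξ : 1 ≤ ξ)
    (hξlam : ξ * lam ≤ 1) : mwt (ξ * lam) ≤ √(ξ * lam) * |log lam| := by
  unfold mwt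
  split_ifs with h
  · exact mul_le_mul_of_nonneg_left (abs_log_mul_le_abs_log hlam hξ hξlam) (sqrt_nonneg _)
  · rw [le_antisymm hξlam (not_lt.1 h), sqrt_one, one_mul]
    exact hlog

lemma one_le_log_sq {lam : ℝ} (hlog : 1 ≤ |log lam|) : 1 ≤ log lam ^ 2 := by
  rw [← sq_abs]
  exact one_le_pow₀ hlog

lemma inv_mul_mwt_sq_div_pow_three_le {η lam : ℝ} (hlam : 0 < lam) (hlog : 1 ≤ |log lam|)
    (hη : 1 ≤ η) : lam⁻¹ * mwt (η * lam) ^ 2 / η ^ 3 ≤ log lam ^ 2 / η ^ 2 := by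
  have hη0 : 0 < η := by linarith
  unfold mwt
  split_ifs with h
  · have hlog_le := abs_log_mul_le_abs_log hlam hη h.le
    rw [mul_pow, sq_sqrt (by positivity), sq_abs, ← sq_abs (log lam)]
    calc lam⁻¹ * (η * lam * log (η * lam) ^ 2) / η ^ 3 = |log (η * lam)| ^ 2 / η ^ 2 := by
          rw [sq_abs]; field_simp
      _ ≤ |log lam| ^ 2 / η ^ 2 := by gcongr
  · have hinv : lam⁻¹ ≤ η := by rw [inv_le_iff_one_le_mul₀ hlam]; linarith
    calc lam⁻¹ * 1 ^ 2 / η ^ 3 ≤ η / η ^ 3 := by gcongr; rw [one_pow, mul_one]; exact hinv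
      _ = 1 / η ^ 2 := by field_simp
      _ ≤ log lam ^ 2 / η ^ 2 := by
          gcongr
          exact one_le_log_sq hlog

theorem integrableOn_and_integral_Ioi_one_div_sq {ξ : ℝ} (hξ : 0 < ξ) :
    IntegrableOn (fun η : ℝ => 1 / η ^ 2) (Ioi ξ) ∧ ∫ η in Ioi ξ, 1 / η ^ 2 = 1 / ξ := by
  have hderiv : ∀ η ∈ Ici ξ, HasDerivAt (fun η => -η⁻¹) (1 / η ^ 2) η := fun η hη =>
    (hasDerivAt_inv (hξ.trans_le hη).ne').neg.congr_deriv (by ring)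
  have hlim : Tendsto (fun η : ℝ => -η⁻¹) atTop (𝓝 (-0)) := tendsto_inv_atTop_zero.neg
  have hpos : ∀ η ∈ Ioi ξ, 0 ≤ 1 / η ^ 2 := fun η _ => by positivity
  refine ⟨integrableOn_Ioi_deriv_of_nonneg' hderiv hpos hlim, ?_⟩
  rw [integral_Ioi_of_hasDerivAt_of_nonneg' hderiv hpos hlim]
  ring

theorem integrableOn_and_integral_Ioi_exp_div_div_sq {μ ξ : ℝ} (hμ : 0 < μ) (hξ : 0 < ξ) :
    IntegrableOn (fun η => exp (μ / η) / η ^ 2) (Ioi ξ) ∧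
      ∫ η in Ioi ξ, exp (μ / η) / η ^ 2 = (exp (μ / ξ) - 1) / μ := by
  have hderiv : ∀ η ∈ Ici ξ,
      HasDerivAt (fun η => -μ⁻¹ * exp (μ / η)) (exp (μ / η) / η ^ 2) η := by
    intro η hη
    have h := (((hasDerivAt_inv (hξ.trans_le hη).ne').const_mul μ).exp).const_mul (-μ⁻¹)
    simp only [← div_eq_mul_inv] at h
    exact h.congr_deriv (by field_simp)
  have hlim : Tendsto (fun η => -μ⁻¹ * exp (μ / η)) atTop (𝓝 (-μ⁻¹ * exp 0)) :=
    ((continuous_exp.tendsto 0).comp (tendsto_const_nhds.div_atTop tendsto_id)).const_mul _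
  have hpos : ∀ η ∈ Ioi ξ, 0 ≤ exp (μ / η) / η ^ 2 := fun η _ => by positivity
  refine ⟨integrableOn_Ioi_deriv_of_nonneg' hderiv hpos hlim, ?_⟩
  rw [integral_Ioi_of_hasDerivAt_of_nonneg' hderiv hpos hlim, exp_zero]
  ring

lemma abs_log_pow_three_mul_rpow_le {lam ε : ℝ} (hlam : 0 < lam) (hlam1 : lam ≤ 1) (hε : 0 < ε) :
    |log lam| ^ 3 * lam ^ ε ≤ (3 / ε) ^ 3 := by
  have h := abs_log_mul_self_rpow_lt lam (ε / 3) hlam hlam1 (by positivity)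
  rw [abs_mul, abs_of_pos (rpow_pos_of_pos hlam _)] at h
  calc |log lam| ^ 3 * lam ^ ε = (|log lam| * lam ^ (ε / 3)) ^ 3 := by
        rw [mul_pow, ← rpow_natCast (lam ^ (ε / 3)), ← rpow_mul hlam.le]
        norm_num
    _ ≤ (3 / ε) ^ 3 := by
        gcongr
        convert h.le using 1
        field_simp

lemma log_sq_mul_mwt_div_le {ξ lam ε : ℝ} (hlam : 0 < lam) (hlog : 1 ≤ |log lam|) (hξ : 1 ≤ ξ)
    (hξlam : ξ * lam ≤ 1) (hε : 0 < ε) :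
    log lam ^ 2 * mwt (ξ * lam) / ξ ≤
      (3 / ε) ^ 3 * (ξ ^ (-(1 : ℝ) / 2) * lam ^ ((1 : ℝ) / 2 - ε)) := by
  have hξ0 : 0 < ξ := by linarith
  have hlam1 : lam ≤ 1 := by nlinarith
  have hsqrt : ξ ^ (-(1 : ℝ) / 2) = ξ ^ (1 / 2 : ℝ) / ξ := by
    rw [← rpow_sub_one hξ0.ne']
    norm_num
  calc log lam ^ 2 * mwt (ξ * lam) / ξ ≤ log lam ^ 2 * (√(ξ * lam) * |log lam|) / ξ := by
        gcongr
        exact mwt_le_sqrt_mul_abs_log hlam hlog hξ hξlam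
    _ = |log lam| ^ 3 * lam ^ ε * (ξ ^ (-(1 : ℝ) / 2) * lam ^ ((1 : ℝ) / 2 - ε)) := by
        rw [sqrt_mul hξ0.le, sqrt_eq_rpow, sqrt_eq_rpow, hsqrt, rpow_sub hlam, ← sq_abs (log lam)]
        field_simp
    _ ≤ (3 / ε) ^ 3 * (ξ ^ (-(1 : ℝ) / 2) * lam ^ ((1 : ℝ) / 2 - ε)) := by
        gcongr
        exact abs_log_pow_three_mul_rpow_le hlam hlam1 hε

/-- The best constant `T` in `g ≤ T w` on `s` is finite and satisfies `T ≤ A + θ T`. -/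
theorem le_div_one_sub_mul_of_self_improving {α : Type*} {s : Set α} {g w : α → ℝ} {A θ M : ℝ}
    (hθ : θ < 1) (hw : ∀ x ∈ s, 0 < w x) (hM : ∀ x ∈ s, g x ≤ M * w x)
    (himp : ∀ T, (∀ x ∈ s, g x ≤ T * w x) → ∀ x ∈ s, g x ≤ (A + θ * T) * w x) :
    ∀ x ∈ s, g x ≤ A / (1 - θ) * w x := by
  intro x hx
  set T := sSup ((fun y => g y / w y) '' s)
  have hbdd : BddAbove ((fun y => g y / w y) '' s) := by
    refine ⟨M, ?_⟩
    rintro _ ⟨y, hy, rfl⟩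
    exact (div_le_iff₀ (hw y hy)).2 (hM y hy)
  have hT : ∀ y ∈ s, g y ≤ T * w y := fun y hy =>
    (div_le_iff₀ (hw y hy)).1 (le_csSup hbdd ⟨y, hy, rfl⟩)
  have hTA : T ≤ A + θ * T := by
    refine csSup_le ⟨_, x, hx, rfl⟩ ?_
    rintro _ ⟨y, hy, rfl⟩
    exact (div_le_iff₀ (hw y hy)).2 (himp T hT y hy)
  calc g x ≤ T * w x := hT x hx
    _ ≤ A / (1 - θ) * w x := by
        have := hw x hx
        gcongr
        rw [le_div_iff₀ (by linarith)]
        linarith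

section FixedEnergy

variable {C0 lam : ℝ} {V1 : ℝ → ℝ} {f0 f : ℝ → ℂ} {G : ℝ → ℝ → ℂ}

lemma norm_kernel_mul_le (hlam : 0 < lam) (hlog : 1 ≤ |log lam|)
    (hV1 : ∀ η : ℝ, 1 ≤ η → |V1 η| ≤ C0 * η ^ (-(3 : ℝ)))
    (hG : ∀ ξ η : ℝ, 0 < ξ → ξ < η → ‖G ξ η‖ ≤ C0 * lam⁻¹ * mwt (ξ * lam) * mwt (η * lam))
    {ξ η c : ℝ} (hξ : 1 ≤ ξ) (hξη : ξ < η) (hf : ‖f η‖ ≤ c * mwt (η * lam)) :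
    ‖G ξ η * (V1 η : ℂ) * f η‖ ≤ C0 ^ 2 * log lam ^ 2 * mwt (ξ * lam) * (c / η ^ 2) := by
  have hη : 1 ≤ η := hξ.trans hξη.le
  have hmξ := mwt_nonneg (ξ * lam)
  have hmη := mwt_pos (mul_pos (by linarith : (0 : ℝ) < η) hlam)
  have hc : 0 ≤ c := nonneg_of_mul_nonneg_left ((norm_nonneg _).trans hf) hmη
  have hV : |V1 η| ≤ C0 / η ^ 3 := by
    have h := hV1 η hη
    rwa [rpow_neg (by linarith), ← div_eq_mul_inv, rpow_ofNat] at h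
  have hGξη := hG ξ η (by linarith) hξη
  calc ‖G ξ η * (V1 η : ℂ) * f η‖ = ‖G ξ η‖ * |V1 η| * ‖f η‖ := by
        rw [norm_mul, norm_mul, Complex.norm_real, norm_eq_abs]
    _ ≤ (C0 * lam⁻¹ * mwt (ξ * lam) * mwt (η * lam)) * (C0 / η ^ 3) * (c * mwt (η * lam)) :=
        mul_le_mul (mul_le_mul hGξη hV (abs_nonneg _) ((norm_nonneg _).trans hGξη)) hf
          (norm_nonneg _) (mul_nonneg ((norm_nonneg _).trans hGξη) ((abs_nonneg _).trans hV))
    _ = C0 ^ 2 * mwt (ξ * lam) * c * (lam⁻¹ * mwt (η * lam) ^ 2 / η ^ 3) := by ring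
    _ ≤ C0 ^ 2 * mwt (ξ * lam) * c * (log lam ^ 2 / η ^ 2) :=
        mul_le_mul_of_nonneg_left (inv_mul_mwt_sq_div_pow_three_le hlam hlog hη)
          (mul_nonneg (mul_nonneg (sq_nonneg _) hmξ) hc)
    _ = C0 ^ 2 * log lam ^ 2 * mwt (ξ * lam) * (c / η ^ 2) := by ring

lemma norm_setIntegral_kernel_le (hlam : 0 < lam) (hlog : 1 ≤ |log lam|)
    (hV1 : ∀ η : ℝ, 1 ≤ η → |V1 η| ≤ C0 * η ^ (-(3 : ℝ)))
    (hG : ∀ ξ η : ℝ, 0 < ξ → ξ < η → ‖G ξ η‖ ≤ C0 * lam⁻¹ * mwt (ξ * lam) * mwt (η * lam))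
    {ξ : ℝ} {u : ℝ → ℝ} (hξ : 1 ≤ ξ) (hu : IntegrableOn (fun η => u η / η ^ 2) (Ioi ξ))
    (hf : ∀ η ∈ Ioi ξ, ‖f η‖ ≤ u η * mwt (η * lam)) :
    ‖∫ η in Ioi ξ, G ξ η * (V1 η : ℂ) * f η‖ ≤
      C0 ^ 2 * log lam ^ 2 * mwt (ξ * lam) * ∫ η in Ioi ξ, u η / η ^ 2 := by
  rw [← integral_const_mul]
  refine norm_integral_le_of_norm_le (hu.const_mul _) ?_
  exact (ae_restrict_iff' measurableSet_Ioi).2 (Eventually.of_forall fun η hη =>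
    norm_kernel_mul_le hlam hlog hV1 hG hξ hη (hf η hη))

lemma norm_le_weighted_of_weighted_bound (hC0 : 0 < C0) (hlam : 0 < lam)
    (hlog : 1 ≤ |log lam|)
    (hV1 : ∀ η : ℝ, 1 ≤ η → |V1 η| ≤ C0 * η ^ (-(3 : ℝ)))
    (hf0 : ∀ ξ : ℝ, 0 < ξ → ‖f0 ξ‖ ≤ C0 * mwt (ξ * lam))
    (hG : ∀ ξ η : ℝ, 0 < ξ → ξ < η → ‖G ξ η‖ ≤ C0 * lam⁻¹ * mwt (ξ * lam) * mwt (η * lam))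
    (heq : ∀ ξ : ℝ, 0 < ξ → f ξ = f0 ξ + ∫ η in Ioi ξ, G ξ η * (V1 η : ℂ) * f η)
    {T : ℝ} (hT : ∀ η ∈ Ici (log lam ^ 2),
      ‖f η‖ ≤ T * (exp (2 * C0 ^ 2 * log lam ^ 2 / η) * mwt (η * lam))) :
    ∀ ξ ∈ Ici (log lam ^ 2),
      ‖f ξ‖ ≤ (C0 + 1 / 2 * T) * (exp (2 * C0 ^ 2 * log lam ^ 2 / ξ) * mwt (ξ * lam)) := by
  set L := log lam ^ 2
  set μ := 2 * C0 ^ 2 * L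
  have hL : 1 ≤ L := one_le_log_sq hlog
  have hμ : 0 < μ := by positivity
  have hT0 : 0 ≤ T := nonneg_of_mul_nonneg_left ((norm_nonneg _).trans (hT L self_mem_Ici))
    (mul_pos (exp_pos _) (mwt_pos (by positivity)))
  intro ξ hξ
  have hξ1 : 1 ≤ ξ := hL.trans hξ
  have hξ0 : 0 < ξ := by linarith
  obtain ⟨hexp_int, hexp⟩ := integrableOn_and_integral_Ioi_exp_div_div_sq hμ hξ0
  have hI := norm_setIntegral_kernel_le (u := fun η => T * exp (μ / η)) hlam hlog hV1 hG hξ1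
    (by simp only [mul_div_assoc]; exact hexp_int.const_mul T)
    (fun η hη => by rw [mul_assoc]; exact hT η (mem_Ici.2 ((mem_Ici.1 hξ).trans hη.le)))
  simp only [mul_div_assoc, integral_const_mul, hexp] at hI
  have hm := mwt_nonneg (ξ * lam)
  have hexp1 : 1 ≤ exp (μ / ξ) := one_le_exp (by positivity)
  calc ‖f ξ‖ ≤ ‖f0 ξ‖ + ‖∫ η in Ioi ξ, G ξ η * (V1 η : ℂ) * f η‖ := by
        rw [heq ξ hξ0]; exact norm_add_le _ _
    _ ≤ C0 * mwt (ξ * lam) + C0 ^ 2 * L * mwt (ξ * lam) * (T * ((exp (μ / ξ) - 1) / μ)) :=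
        add_le_add (hf0 ξ hξ0) hI
    _ = C0 * mwt (ξ * lam) + 1 / 2 * T * (exp (μ / ξ) - 1) * mwt (ξ * lam) := by
        field_simp
        ring
    _ ≤ (C0 + 1 / 2 * T) * (exp (μ / ξ) * mwt (ξ * lam)) := by
        nlinarith [mul_nonneg (mul_nonneg hC0.le hm) (sub_nonneg.2 hexp1), mul_nonneg hT0 hm]

theorem norm_le_mwt_of_volterra (hC0 : 0 < C0) (hlam : 0 < lam) (hlog : 1 ≤ |log lam|)
    (hV1 : ∀ η : ℝ, 1 ≤ η → |V1 η| ≤ C0 * η ^ (-(3 : ℝ)))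
    (hf0 : ∀ ξ : ℝ, 0 < ξ → ‖f0 ξ‖ ≤ C0 * mwt (ξ * lam))
    (hG : ∀ ξ η : ℝ, 0 < ξ → ξ < η → ‖G ξ η‖ ≤ C0 * lam⁻¹ * mwt (ξ * lam) * mwt (η * lam))
    (heq : ∀ ξ : ℝ, 0 < ξ → f ξ = f0 ξ + ∫ η in Ioi ξ, G ξ η * (V1 η : ℂ) * f η)
    (hbd : ∃ M, ∀ ξ : ℝ, 0 < ξ → ‖f ξ‖ ≤ M * mwt (ξ * lam)) :
    ∀ ξ, log lam ^ 2 ≤ ξ → ‖f ξ‖ ≤ 2 * C0 * exp (2 * C0 ^ 2) * mwt (ξ * lam) := by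
  set L := log lam ^ 2
  have hL : 1 ≤ L := one_le_log_sq hlog
  obtain ⟨M, hM⟩ := hbd
  have hweighted := le_div_one_sub_mul_of_self_improving (s := Ici L) (g := fun ξ => ‖f ξ‖)
    (w := fun ξ => exp (2 * C0 ^ 2 * L / ξ) * mwt (ξ * lam)) (A := C0) (M := |M|)
    (by norm_num : (1 / 2 : ℝ) < 1)
    (fun ξ hξ => mul_pos (exp_pos _) (mwt_pos (mul_pos (by linarith [mem_Ici.1 hξ]) hlam)))
    (fun ξ hξ => by
      have hξ0 : 0 < ξ := by linarith [mem_Ici.1 hξ]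
      calc ‖f ξ‖ ≤ M * mwt (ξ * lam) := hM ξ hξ0
        _ ≤ |M| * (exp (2 * C0 ^ 2 * L / ξ) * mwt (ξ * lam)) := by
            have := mwt_nonneg (ξ * lam)
            have := one_le_exp (by positivity : 0 ≤ 2 * C0 ^ 2 * L / ξ)
            gcongr
            · exact le_abs_self M
            · exact le_mul_of_one_le_left (mwt_nonneg _) this)
    (fun T hT => norm_le_weighted_of_weighted_bound hC0 hlam hlog hV1 hf0 hG heq hT)
  intro ξ hξ
  have hξ0 : 0 < ξ := by linarith
  have hexp : exp (2 * C0 ^ 2 * L / ξ) ≤ exp (2 * C0 ^ 2) := by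
    gcongr
    rw [div_le_iff₀ hξ0]
    nlinarith [sq_nonneg C0]
  calc ‖f ξ‖ ≤ C0 / (1 - 1 / 2) * (exp (2 * C0 ^ 2 * L / ξ) * mwt (ξ * lam)) :=
        hweighted ξ hξ
    _ ≤ C0 / (1 - 1 / 2) * (exp (2 * C0 ^ 2) * mwt (ξ * lam)) := by
        have := mwt_nonneg (ξ * lam)
        gcongr
    _ = 2 * C0 * exp (2 * C0 ^ 2) * mwt (ξ * lam) := by ring

theorem norm_sub_le_of_volterra (hC0 : 0 < C0) (hlam : 0 < lam) (hlog : 1 ≤ |log lam|)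
    (hV1 : ∀ η : ℝ, 1 ≤ η → |V1 η| ≤ C0 * η ^ (-(3 : ℝ)))
    (hf0 : ∀ ξ : ℝ, 0 < ξ → ‖f0 ξ‖ ≤ C0 * mwt (ξ * lam))
    (hG : ∀ ξ η : ℝ, 0 < ξ → ξ < η → ‖G ξ η‖ ≤ C0 * lam⁻¹ * mwt (ξ * lam) * mwt (η * lam))
    (heq : ∀ ξ : ℝ, 0 < ξ → f ξ = f0 ξ + ∫ η in Ioi ξ, G ξ η * (V1 η : ℂ) * f η)
    (hbd : ∃ M, ∀ ξ : ℝ, 0 < ξ → ‖f ξ‖ ≤ M * mwt (ξ * lam)) :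
    ∀ ξ, log lam ^ 2 ≤ ξ → ‖f ξ - f0 ξ‖ ≤
      C0 ^ 2 * (2 * C0 * exp (2 * C0 ^ 2)) * (log lam ^ 2 * mwt (ξ * lam) / ξ) := by
  intro ξ hξ
  have hL := one_le_log_sq hlog
  have hξ0 : 0 < ξ := by linarith
  obtain ⟨hint, hintegral⟩ := integrableOn_and_integral_Ioi_one_div_sq hξ0
  have hI := norm_setIntegral_kernel_le (u := fun _ => 2 * C0 * exp (2 * C0 ^ 2)) hlam hlog hV1
    hG (hL.trans hξ)
    (IntegrableOn.congr_fun (hint.const_mul _) (fun η _ => mul_one_div _ _) measurableSet_Ioi)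
    (fun η hη => norm_le_mwt_of_volterra hC0 hlam hlog hV1 hf0 hG heq hbd η (hξ.trans hη.le))
  simp only [← mul_one_div (2 * C0 * exp (2 * C0 ^ 2)), integral_const_mul, hintegral] at hI
  rw [heq ξ hξ0, add_sub_cancel_left]
  exact hI.trans_eq (by ring)

end FixedEnergy

theorem low_energy_jost_bound_general (C0 : ℝ) (hC0 : 0 < C0)
    (V1 : ℝ → ℝ) (f0 fplus : ℝ → ℝ → ℂ) (G0 : ℝ → ℝ → ℝ → ℂ)
    (hV1 : ∀ ξ : ℝ, 1 ≤ ξ → |V1 ξ| ≤ C0 * ξ ^ (-(3 : ℝ)))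
    (hf0 : ∀ lam : ℝ, 0 < lam → ∀ ξ : ℝ, 0 < ξ → ‖f0 lam ξ‖ ≤ C0 * mwt (ξ * lam))
    (hG0 : ∀ lam : ℝ, 0 < lam → ∀ ξ η : ℝ, 0 < ξ → ξ < η →
      ‖G0 lam ξ η‖ ≤ C0 * lam⁻¹ * mwt (ξ * lam) * mwt (η * lam))
    (heq : ∀ lam : ℝ, 0 < lam → ∀ ξ : ℝ, 0 < ξ →
      fplus lam ξ = f0 lam ξ + ∫ η in Set.Ioi ξ, G0 lam ξ η * (V1 η : ℂ) * fplus lam η)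
    (hbd : ∀ lam : ℝ, 0 < lam → ∃ M, ∀ ξ : ℝ, 0 < ξ → ‖fplus lam ξ‖ ≤ M * mwt (ξ * lam)) :
    ∀ ε : ℝ, 0 < ε → ∃ C > 0, ∃ lam0 > 0, ∀ lam : ℝ, 0 < lam → lam < lam0 →
      ∀ ξ : ℝ, (Real.log lam) ^ 2 ≤ ξ → ξ * lam ≤ 1 →
        ‖fplus lam ξ‖ ≤ C * mwt (ξ * lam) ∧
        ‖fplus lam ξ - f0 lam ξ‖ ≤ C * ξ ^ (-(1 : ℝ) / 2) * lam ^ ((1 : ℝ) / 2 - ε) := by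
  intro ε hε
  set K := 2 * C0 * exp (2 * C0 ^ 2)
  refine ⟨K * (1 + C0 ^ 2 * (3 / ε) ^ 3), by positivity, exp (-1), exp_pos _, ?_⟩
  intro lam hlam hlam1 ξ hξ hξlam
  have hlog := one_le_abs_log_of_lt_exp_neg_one_s16 hlam hlam1
  have hf := norm_le_mwt_of_volterra hC0 hlam hlog hV1 (hf0 lam hlam) (hG0 lam hlam)
    (heq lam hlam) (hbd lam hlam) ξ hξ
  have hdiff := norm_sub_le_of_volterra hC0 hlam hlog hV1 (hf0 lam hlam) (hG0 lam hlam)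
    (heq lam hlam) (hbd lam hlam) ξ hξ
  have hξ1 : 1 ≤ ξ := (one_le_log_sq hlog).trans hξ
  have hdecay := log_sq_mul_mwt_div_le hlam hlog hξ1 hξlam hε
  have hm := mwt_nonneg (ξ * lam)
  have hpow : 0 ≤ ξ ^ (-(1 : ℝ) / 2) * lam ^ ((1 : ℝ) / 2 - ε) :=
    mul_nonneg (rpow_nonneg (by linarith) _) (rpow_nonneg hlam.le _)
  constructor
  · nlinarith [mul_nonneg (by positivity : 0 ≤ K * C0 ^ 2 * (3 / ε) ^ 3) hm]
  · calc ‖fplus lam ξ - f0 lam ξ‖ ≤ C0 ^ 2 * K * (log lam ^ 2 * mwt (ξ * lam) / ξ) := hdiff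
      _ ≤ C0 ^ 2 * K * ((3 / ε) ^ 3 * (ξ ^ (-(1 : ℝ) / 2) * lam ^ ((1 : ℝ) / 2 - ε))) := by
          gcongr
      _ ≤ K * (1 + C0 ^ 2 * (3 / ε) ^ 3) * ξ ^ (-(1 : ℝ) / 2) * lam ^ ((1 : ℝ) / 2 - ε) := by
          nlinarith [mul_nonneg (by positivity : 0 ≤ K) hpow]

/-- Low-energy bounds for the perturbed Jost solution: if
`f₊(ξ,λ) = f₀(ξ,λ) + ∫_ξ^∞ G₀(ξ,η;λ) V₁(η) f₊(η,λ) dη` with `|V₁(ξ)| ≲ ξ⁻³`,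
`|f₀| ≲ m(ξλ)` and `|G₀| ≲ λ⁻¹ m(ξλ) m(ηλ)`, then for small `λ > 0` and
`|log λ|² ≤ ξ ≤ λ⁻¹` one has `|f₊(ξ,λ)| ≲ m(ξλ)` and
`|f₊(ξ,λ) - f₀(ξ,λ)| ≲ ξ^{-1/2} λ^{1/2-ε}` for any fixed `ε > 0`. -/
theorem low_energy_jost_bound (C0 : ℝ) (hC0 : 0 < C0)
    (V1 : ℝ → ℝ) (f0 fplus : ℝ → ℝ → ℂ) (G0 : ℝ → ℝ → ℝ → ℂ)
    (hV1 : ∀ ξ : ℝ, 1 ≤ ξ → |V1 ξ| ≤ C0 * ξ ^ (-(3 : ℝ)))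
    (hf0 : ∀ lam : ℝ, 0 < lam → ∀ ξ : ℝ, 0 < ξ → ‖f0 lam ξ‖ ≤ C0 * mwt (ξ * lam))
    (hG0 : ∀ lam : ℝ, 0 < lam → ∀ ξ η : ℝ, 0 < ξ → ξ < η →
      ‖G0 lam ξ η‖ ≤ C0 * lam⁻¹ * mwt (ξ * lam) * mwt (η * lam))
    (hint : ∀ lam : ℝ, 0 < lam → ∀ ξ : ℝ, 0 < ξ →
      IntegrableOn (fun η => G0 lam ξ η * (V1 η : ℂ) * fplus lam η) (Set.Ioi ξ))
    (heq : ∀ lam : ℝ, 0 < lam → ∀ ξ : ℝ, 0 < ξ →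
      fplus lam ξ = f0 lam ξ + ∫ η in Set.Ioi ξ, G0 lam ξ η * (V1 η : ℂ) * fplus lam η)
    (hbd : ∀ lam : ℝ, 0 < lam → ∃ M, ∀ ξ : ℝ, 0 < ξ → ‖fplus lam ξ‖ ≤ M * mwt (ξ * lam)) :
    ∀ ε : ℝ, 0 < ε → ∃ C > 0, ∃ lam0 > 0, ∀ lam : ℝ, 0 < lam → lam < lam0 →
      ∀ ξ : ℝ, (Real.log lam) ^ 2 ≤ ξ → ξ * lam ≤ 1 →
        ‖fplus lam ξ‖ ≤ C * mwt (ξ * lam) ∧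
        ‖fplus lam ξ - f0 lam ξ‖ ≤ C * ξ ^ (-(1 : ℝ) / 2) * lam ^ ((1 : ℝ) / 2 - ε) :=
  low_energy_jost_bound_general C0 hC0 V1 f0 fplus G0 hV1 hf0 hG0 heq hbd
end
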